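/- Let V be a finite nonempty type and μ : V → V → ℝ a symmetric function with μ x y ≥ 0 and μ x x = 0 for all x, y, such that μ x y ≥ 1 whenever μ x y ≠ 0. Set μ_x = ∑_{y} μ x y and assume μ_x > 0 for every x. Let G be the simple graph on V with x adjacent to y iff x ≠ y and μ x y > 0, assumed connected, with graph distance d(x,y). Define L ∈ Matrix V V ℝ by L x y = μ x y / μ_x for x ≠ y and L x x = -1, and for t ≥ 0 set q_t(x,y) = (Matrix.exp (t • L)) x y / μ_y. Then for every x ∈ V and every real r > 0, writing V(x,r) = ∑_{y : (d(x,y) : ℝ) ≤ r} μ_y, one has q_{2*r*V(x,r)}(x,x) ≤ 2 / V(x,r). -/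

import Mathlib

/-!
Let `P_t = exp (t L)`, a Markov semigroup reversible with respect to `μv`. Reversibility gives
`q_{2s}(x,x) = ∑_z P_s(x,z)^2 / μv z`, whose derivative is minus a Dirichlet energy, so
`t ↦ q_t(x,x)` is nonincreasing. With `B` the ball and `Vol = μ(B)`, solve the Poisson equation
`L u = 1_B / Vol - δ_x / μv x`. Then `(P_t u)(x)` has derivative `P_t(x,B) / Vol - q_t(x,x)`,
which is at most `1 / Vol - q_T(x,x)` for `t ≤ T`, so `T (q_T(x,x) - 1 / Vol) ≤ u(x) - min u`.

Since `u` is harmonic off `B`, its minimum is attained at some `b ∈ B`. Green's formula bounds the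
energy of `u` by `2 (u(x) - u(b))`, and Cauchy–Schwarz along a geodesic from `x` to `b` (length
`≤ r`, weights `≥ 1`) gives `(u(x) - u(b))^2 ≤ r · 2 (u(x) - u(b))`. So `u(x) - min u ≤ 2r`, and
`T = 2 r Vol` yields `q_T(x,x) ≤ 2 / Vol`.
-/

open NormedSpace Matrix Finset

namespace Matrix

variable {V : Type*} [Fintype V] [DecidableEq V]

attribute [local instance] Matrix.linftyOpNormedRing Matrix.linftyOpNormedAlgebra in
theorem hasDerivAt_exp_smul_apply (A : Matrix V V ℝ) (i j : V) (t : ℝ) :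
    HasDerivAt (fun s : ℝ => exp (s • A) i j) ((exp (t • A) * A) i j) t :=
  (entryLinearMap ℝ ℝ i j).toContinuousLinearMap.hasFDerivAt.comp_hasDerivAt t
    (hasDerivAt_exp_smul_const A t)

theorem hasDerivAt_exp_smul_mulVec_apply (A : Matrix V V ℝ) (v : V → ℝ) (i : V) (t : ℝ) :
    HasDerivAt (fun s : ℝ => (exp (s • A) *ᵥ v) i) ((exp (t • A) *ᵥ (A *ᵥ v)) i) t := by
  rw [mulVec_mulVec]
  exact HasDerivAt.fun_sum fun j _ => (hasDerivAt_exp_smul_apply A i j t).mul_const (v j)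

theorem exp_smul_mulVec_eq_self {A : Matrix V V ℝ} {v : V → ℝ} (hv : A *ᵥ v = 0) (t : ℝ) :
    exp (t • A) *ᵥ v = v := by
  ext i
  have hderiv (s : ℝ) := hasDerivAt_exp_smul_mulVec_apply A v i s
  have hconst := is_const_of_deriv_eq_zero (fun s => (hderiv s).differentiableAt)
    (fun s => by rw [(hderiv s).deriv, hv, mulVec_zero, Pi.zero_apply]) t 0
  simpa using hconst

theorem sum_exp_smul_apply {A : Matrix V V ℝ} (hA : ∀ i, ∑ j, A i j = 0) (t : ℝ) (i : V) :
    ∑ j, exp (t • A) i j = 1 := by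
  have hA1 : A *ᵥ 1 = 0 := funext fun i => by simpa [mulVec, dotProduct] using hA i
  simpa [mulVec, dotProduct] using congrFun (exp_smul_mulVec_eq_self hA1 t) i

attribute [local instance] Matrix.linftyOpNormedRing Matrix.linftyOpNormedAlgebra in
theorem exp_apply_nonneg {N : Matrix V V ℝ} (hN : ∀ i j, 0 ≤ N i j) (i j : V) :
    0 ≤ exp N i j := by
  have hsum := Pi.hasSum.1 (Pi.hasSum.1 (exp_series_hasSum_exp' (𝕂 := ℝ) N) i) j
  exact hsum.nonneg fun n => mul_nonneg (by positivity) (pow_apply_nonneg hN n i j)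

/-- Shifting by a multiple of `1` makes all entries nonnegative and only rescales the
exponential by a positive factor. -/
theorem exp_smul_apply_nonneg {A : Matrix V V ℝ} (hA : ∀ i j, i ≠ j → 0 ≤ A i j) {t : ℝ}
    (ht : 0 ≤ t) (i j : V) : 0 ≤ exp (t • A) i j := by
  set s := ∑ k, |A k k|
  set N := t • (A + s • 1)
  have hN : ∀ a b, 0 ≤ N a b := by
    intro a b
    rcases eq_or_ne a b with rfl | hab
    · have : -A a a ≤ s := (neg_le_abs _).trans (single_le_sum (fun k _ => abs_nonneg (A k k))
        (mem_univ a))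
      simp only [N, smul_apply, add_apply, one_apply_eq, smul_eq_mul]
      nlinarith
    · simpa [N, one_apply_ne hab] using mul_nonneg ht (hA a b hab)
  have hsplit : t • A = N + (-(t * s)) • 1 := by
    simp only [N, smul_add, smul_smul]
    module
  rw [hsplit, exp_add_of_commute _ _ ((Commute.one_right N).smul_right _), smul_one_eq_diagonal,
    exp_diagonal, mul_diagonal, Pi.exp_def, ← Real.exp_eq_exp_ℝ]
  exact mul_nonneg (exp_apply_nonneg hN i j) (Real.exp_pos _).le

theorem exp_detailedBalance {A : Matrix V V ℝ} {m : V → ℝ} (hm : ∀ i, m i ≠ 0)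
    (hA : ∀ i j, m i * A i j = m j * A j i) (i j : V) : m i * exp A i j = m j * exp A j i := by
  set U := (isUnit_diagonal.2 (Pi.isUnit_iff.2 fun i => (hm i).isUnit)).unit
  have hAT : Aᵀ * U = U * A := by
    ext i j
    simp [U, hA i j, mul_comm]
  have hexpT : (exp A)ᵀ * U = U * exp A := by
    rw [← Units.eq_mul_inv_iff_mul_eq] at hAT ⊢
    rw [← exp_transpose, hAT, exp_units_conj]
  simpa [U, mul_comm] using congrFun (congrFun hexpT j) i

theorem exists_mulVec_eq_of_isSymm {M : Matrix V V ℝ} (hM : M.IsSymm) {f : V → ℝ}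
    (hf : ∀ g, M *ᵥ g = 0 → f ⬝ᵥ g = 0) : ∃ u, M *ᵥ u = f := by
  have hT : (toEuclideanLin M).IsSymmetric := by
    rw [isSymmetric_toEuclideanLin_iff, IsHermitian, conjTranspose_eq_transpose_of_trivial]
    exact hM
  have hmem : WithLp.toLp 2 f ∈ LinearMap.range (toEuclideanLin M) := by
    rw [← Submodule.orthogonal_orthogonal (LinearMap.range _), hT.orthogonal_range]
    intro g hg
    exact hf g.ofLp (congrArg WithLp.ofLp hg)
  obtain ⟨u, hu⟩ := hmem
  exact ⟨u.ofLp, congrArg WithLp.ofLp hu⟩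

end Matrix

section WeightedGraph

variable {V : Type*}

theorem add_sq_le_of_sq_le_mul {s t k S : ℝ} (hk : 0 ≤ k) (hS : 0 ≤ S) (ht : t ^ 2 ≤ k * S) :
    (s + t) ^ 2 ≤ (k + 1) * (s ^ 2 + S) := by
  rcases hk.eq_or_lt with rfl | hk
  · nlinarith
  · nlinarith [sq_nonneg (k * s - t)]

theorem SimpleGraph.Walk.sq_sub_le_length_mul_sum_darts {G : SimpleGraph V} (g : V → ℝ)
    {a b : V} (p : G.Walk a b) :
    (g a - g b) ^ 2 ≤ p.length * (p.darts.map fun d => (g d.fst - g d.snd) ^ 2).sum := by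
  induction p with
  | nil => simp
  | @cons a c b hac q ih =>
    have hS : 0 ≤ (q.darts.map fun d => (g d.fst - g d.snd) ^ 2).sum :=
      List.sum_nonneg fun x hx => by
        obtain ⟨d, -, rfl⟩ := List.mem_map.1 hx
        exact sq_nonneg _
    simp only [darts_cons, List.map_cons, List.sum_cons, length_cons, Nat.cast_succ]
    rw [show g a - g b = (g a - g c) + (g c - g b) by ring]
    exact add_sq_le_of_sq_le_mul (Nat.cast_nonneg _) hS ih

theorem mul_sq_sub_nonneg {c : V → V → ℝ} (hc : ∀ z w, z ≠ w → 0 ≤ c z w) (g : V → ℝ) (z w : V) :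
    0 ≤ c z w * (g z - g w) ^ 2 := by
  rcases eq_or_ne z w with rfl | h
  · simp
  · exact mul_nonneg (hc z w h) (sq_nonneg _)

theorem SimpleGraph.Connected.eq_of_forall_adj {β : Type*} {G : SimpleGraph V}
    (hconn : G.Connected) {g : V → β} (h : ∀ z w, G.Adj z w → g z = g w) (z w : V) :
    g z = g w := by
  obtain ⟨p⟩ := hconn.preconnected z w
  induction p with
  | nil => rfl
  | cons hadj _ ih => exact (h _ _ hadj).trans ih

variable [Fintype V]

def laplacian (c : V → V → ℝ) (g : V → ℝ) (z : V) : ℝ :=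
  ∑ w, c z w * (g w - g z)

/-- Every edge is counted in both directions, so this is twice the usual Dirichlet form. -/
def dirichletEnergy (c : V → V → ℝ) (g : V → ℝ) : ℝ :=
  ∑ z, ∑ w, c z w * (g z - g w) ^ 2

variable {c : V → V → ℝ}

theorem dirichletEnergy_nonneg (hc : ∀ z w, z ≠ w → 0 ≤ c z w) (g : V → ℝ) :
    0 ≤ dirichletEnergy c g :=
  sum_nonneg fun z _ => sum_nonneg fun w _ => mul_sq_sub_nonneg hc g z w

theorem two_mul_sum_mul_laplacian (hsym : ∀ z w, c z w = c w z) (g : V → ℝ) :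
    2 * ∑ z, g z * laplacian c g z = -dirichletEnergy c g := by
  have hswap : ∑ z, g z * laplacian c g z = ∑ z, ∑ w, c z w * (g z - g w) * g w := by
    simp only [laplacian, mul_sum]
    rw [sum_comm]
    refine sum_congr rfl fun z _ => sum_congr rfl fun w _ => ?_
    rw [hsym]
    ring
  rw [two_mul]
  nth_rw 2 [hswap]
  simp only [laplacian, dirichletEnergy, mul_sum, ← sum_add_distrib, ← sum_neg_distrib]
  exact sum_congr rfl fun z _ => sum_congr rfl fun w _ => by ring

theorem eq_of_adj_of_dirichletEnergy_eq_zero {G : SimpleGraph V}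
    (hc : ∀ z w, z ≠ w → 0 ≤ c z w) (hadj : ∀ z w, G.Adj z w → 0 < c z w) {g : V → ℝ}
    (h0 : dirichletEnergy c g = 0) {z w : V} (hzw : G.Adj z w) : g z = g w := by
  have hrow := (sum_eq_zero_iff_of_nonneg fun z _ =>
    sum_nonneg fun w _ => mul_sq_sub_nonneg hc g z w).1 h0 z (mem_univ z)
  have hterm := (sum_eq_zero_iff_of_nonneg fun w _ =>
    mul_sq_sub_nonneg hc g z w).1 hrow w (mem_univ w)
  simpa [(hadj z w hzw).ne', sub_eq_zero] using hterm

theorem eq_of_adj_of_laplacian_eq_zero {G : SimpleGraph V}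
    (hc : ∀ z w, z ≠ w → 0 ≤ c z w) (hadj : ∀ z w, G.Adj z w → 0 < c z w) {g : V → ℝ} {a : V}
    (hmin : ∀ z, g a ≤ g z) (h0 : laplacian c g a = 0) {w : V} (haw : G.Adj a w) :
    g w = g a := by
  have hterm_nonneg : ∀ z, 0 ≤ c a z * (g z - g a) := by
    intro z
    rcases eq_or_ne a z with rfl | h
    · simp
    · exact mul_nonneg (hc a z h) (sub_nonneg.2 (hmin z))
  have hterm := (sum_eq_zero_iff_of_nonneg fun z _ => hterm_nonneg z).1 h0 w (mem_univ w)
  simpa [(hadj a w haw).ne', sub_eq_zero] using hterm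

theorem exists_mem_forall_le_of_laplacian_eq_zero {G : SimpleGraph V} (hconn : G.Connected)
    (hc : ∀ z w, z ≠ w → 0 ≤ c z w) (hadj : ∀ z w, G.Adj z w → 0 < c z w) {g : V → ℝ}
    {B : Finset V} (hB : B.Nonempty) (hharm : ∀ z ∉ B, laplacian c g z = 0) :
    ∃ b ∈ B, ∀ z, g b ≤ g z := by
  obtain ⟨b, hb⟩ := hB
  obtain ⟨z₀, -, hz₀⟩ := exists_min_image univ g ⟨b, mem_univ b⟩
  by_contra! hnot
  obtain ⟨p⟩ := hconn.preconnected z₀ b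
  obtain ⟨d, -, hd₁, hd₂⟩ := p.exists_boundary_dart {z | ∀ w, g z ≤ g w}
    (fun w => hz₀ w (mem_univ w)) (fun h => by obtain ⟨z, hz⟩ := hnot b hb; linarith [h z])
  have hout : d.fst ∉ B := fun h => by obtain ⟨z, hz⟩ := hnot _ h; linarith [hd₁ z]
  refine hd₂ fun w => ?_
  rw [eq_of_adj_of_laplacian_eq_zero hc hadj hd₁ (hharm _ hout) d.adj]
  exact hd₁ w

theorem SimpleGraph.Walk.IsPath.sum_darts_le_dirichletEnergy {G : SimpleGraph V}
    (hc : ∀ z w, z ≠ w → 0 ≤ c z w) (hadj : ∀ z w, G.Adj z w → 1 ≤ c z w) (g : V → ℝ)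
    {a b : V} {p : G.Walk a b} (hp : p.IsPath) :
    (p.darts.map fun d => (g d.fst - g d.snd) ^ 2).sum ≤ dirichletEnergy c g := by
  classical
  rw [← List.sum_toFinset _ (darts_nodup_of_support_nodup hp.support_nodup)]
  calc ∑ d ∈ p.darts.toFinset, (g d.fst - g d.snd) ^ 2
      ≤ ∑ d ∈ p.darts.toFinset, c d.fst d.snd * (g d.fst - g d.snd) ^ 2 :=
        sum_le_sum fun d _ => le_mul_of_one_le_left (sq_nonneg _) (hadj _ _ d.adj)
    _ = ∑ e ∈ p.darts.toFinset.image SimpleGraph.Dart.toProd, c e.1 e.2 * (g e.1 - g e.2) ^ 2 :=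
        (sum_image (f := fun e : V × V => c e.1 e.2 * (g e.1 - g e.2) ^ 2)
          fun _ _ _ _ h => SimpleGraph.Dart.toProd_injective h).symm
    _ ≤ ∑ e : V × V, c e.1 e.2 * (g e.1 - g e.2) ^ 2 :=
        sum_le_sum_of_subset_of_nonneg (subset_univ _) fun e _ _ => mul_sq_sub_nonneg hc g _ _
    _ = dirichletEnergy c g := Fintype.sum_prod_type _

theorem sq_sub_le_dist_mul_dirichletEnergy {G : SimpleGraph V} (hconn : G.Connected)
    (hc : ∀ z w, z ≠ w → 0 ≤ c z w) (hadj : ∀ z w, G.Adj z w → 1 ≤ c z w) (g : V → ℝ)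
    (a b : V) : (g a - g b) ^ 2 ≤ G.dist a b * dirichletEnergy c g := by
  obtain ⟨p, hp, hlen⟩ := hconn.exists_path_of_dist a b
  calc (g a - g b) ^ 2 ≤ p.length * (p.darts.map fun d => (g d.fst - g d.snd) ^ 2).sum :=
        p.sq_sub_le_length_mul_sum_darts g
    _ ≤ G.dist a b * dirichletEnergy c g := by
        rw [hlen]
        gcongr
        exact hp.sum_darts_le_dirichletEnergy hc hadj g

theorem exists_laplacian_eq_of_sum_eq_zero [DecidableEq V] {G : SimpleGraph V}
    (hconn : G.Connected) (hsym : ∀ z w, c z w = c w z)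
    (hc : ∀ z w, z ≠ w → 0 ≤ c z w) (hadj : ∀ z w, G.Adj z w → 0 < c z w) {f : V → ℝ}
    (hf : ∑ z, f z = 0) : ∃ u, laplacian c u = f := by
  set M : Matrix V V ℝ := of c - diagonal fun z => ∑ w, c z w
  have hM (g : V → ℝ) : M *ᵥ g = laplacian c g := funext fun z => by
    rw [sub_mulVec, Pi.sub_apply, mulVec_diagonal]
    simp [laplacian, mulVec, dotProduct, mul_sub, sum_mul]
  have hMsymm : M.IsSymm := by
    ext z w
    by_cases h : z = w <;> simp [M, hsym z w, h, eq_comm]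
  have hker (g : V → ℝ) (hg : M *ᵥ g = 0) : f ⬝ᵥ g = 0 := by
    rw [hM] at hg
    have h0 : dirichletEnergy c g = 0 := by
      have := two_mul_sum_mul_laplacian hsym g
      simp only [hg, Pi.zero_apply, mul_zero, sum_const_zero] at this
      linarith
    obtain ⟨z₀⟩ := hconn.nonempty
    have hconst := hconn.eq_of_forall_adj
      (fun z w h => eq_of_adj_of_dirichletEnergy_eq_zero hc hadj h0 h)
    simp [dotProduct, hconst _ z₀, ← sum_mul, hf]
  obtain ⟨u, hu⟩ := Matrix.exists_mulVec_eq_of_isSymm hMsymm hker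
  exact ⟨u, (hM u).symm.trans hu⟩

end WeightedGraph

section GreenSource

variable {V : Type*} [Fintype V] [DecidableEq V] {m : V → ℝ}

noncomputable def greenSource (m : V → ℝ) (B : Finset V) (x z : V) : ℝ :=
  (if z ∈ B then (∑ y ∈ B, m y)⁻¹ else 0) - if z = x then (m x)⁻¹ else 0

theorem mulVec_greenSource_apply (P : Matrix V V ℝ) (B : Finset V) (x i : V) :
    (P *ᵥ greenSource m B x) i = (∑ z ∈ B, P i z) / (∑ y ∈ B, m y) - P i x / m x := by
  simp [mulVec, dotProduct, greenSource, mul_sub, sum_sub_distrib, mul_ite, sum_mul,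
    div_eq_mul_inv]

theorem sum_mul_mul_greenSource (hx : m x ≠ 0) (g : V → ℝ) (B : Finset V) :
    ∑ z, g z * (m z * greenSource m B x z) = (∑ z ∈ B, g z * m z) / (∑ y ∈ B, m y) - g x := by
  simp [greenSource, mul_sub, sum_sub_distrib, mul_ite, sum_mul, div_eq_mul_inv, hx, mul_assoc]

theorem dirichletEnergy_le_of_laplacian_eq_greenSource {c : V → V → ℝ}
    (hsym : ∀ z w, c z w = c w z) (hm : ∀ z, 0 < m z) {B : Finset V} (hB : B.Nonempty) {x : V}
    {u : V → ℝ} (hu : ∀ z, laplacian c u z = m z * greenSource m B x z) {b : V}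
    (hb : ∀ z ∈ B, u b ≤ u z) : dirichletEnergy c u ≤ 2 * (u x - u b) := by
  have hE := two_mul_sum_mul_laplacian hsym u
  simp only [hu, sum_mul_mul_greenSource (hm x).ne'] at hE
  have havg : u b ≤ (∑ z ∈ B, u z * m z) / ∑ y ∈ B, m y := by
    rw [le_div_iff₀ (sum_pos (fun y _ => hm y) hB), mul_sum]
    exact sum_le_sum fun z hz => mul_le_mul_of_nonneg_right (hb z hz) (hm z).le
  linarith

theorem exists_forall_le_sub_le_two_mul {c : V → V → ℝ} {G : SimpleGraph V}
    (hconn : G.Connected) (hsym : ∀ z w, c z w = c w z) (hc : ∀ z w, z ≠ w → 0 ≤ c z w)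
    (hadj : ∀ z w, G.Adj z w → 1 ≤ c z w) (hm : ∀ z, 0 < m z) {x : V} {r : ℝ} (hr : 0 ≤ r)
    {B : Finset V} (hB : ∀ z ∈ B, (G.dist x z : ℝ) ≤ r) (hxB : x ∈ B) {u : V → ℝ}
    (hu : ∀ z, laplacian c u z = m z * greenSource m B x z) :
    ∃ b, (∀ z, u b ≤ u z) ∧ u x - u b ≤ 2 * r := by
  have hharm : ∀ z ∉ B, laplacian c u z = 0 := fun z hz => by
    simp [hu, greenSource, hz, (ne_of_mem_of_not_mem hxB hz).symm]
  obtain ⟨b, hbB, hb⟩ := exists_mem_forall_le_of_laplacian_eq_zero hconn hc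
    (fun z w h => one_pos.trans_le (hadj z w h)) ⟨x, hxB⟩ hharm
  refine ⟨b, hb, ?_⟩
  have hE := dirichletEnergy_le_of_laplacian_eq_greenSource hsym hm ⟨x, hxB⟩ hu fun z _ => hb z
  have hosc : (u x - u b) ^ 2 ≤ r * (2 * (u x - u b)) :=
    (sq_sub_le_dist_mul_dirichletEnergy hconn hc hadj u x b).trans
      (mul_le_mul (hB b hbB) hE (dirichletEnergy_nonneg hc u) hr)
  nlinarith [hb x]

end GreenSource

section HeatKernel

variable {V : Type*} [Fintype V] {m : V → ℝ} {L : Matrix V V ℝ}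

theorem mul_mulVec_apply_eq_laplacian (hrow : ∀ z, ∑ w, L z w = 0) (g : V → ℝ) (z : V) :
    m z * (L *ᵥ g) z = laplacian (fun z w => m z * L z w) g z := by
  simp [laplacian, mulVec, dotProduct, mul_sub, sum_sub_distrib, ← sum_mul, ← mul_sum, hrow,
    mul_assoc]

theorem mul_apply_eq_laplacian (hm : ∀ z, m z ≠ 0) (hrow : ∀ z, ∑ w, L z w = 0)
    (hrev : ∀ z w, m z * L z w = m w * L w z) (P : Matrix V V ℝ) (x z : V) :
    (P * L) x z = laplacian (fun z w => m z * L z w) (fun w => P x w / m w) z := by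
  rw [← mul_mulVec_apply_eq_laplacian hrow, mul_apply, mulVec, dotProduct, mul_sum]
  refine sum_congr rfl fun w _ => ?_
  rw [← mul_assoc, hrev]
  field_simp [hm w]

variable [DecidableEq V]

theorem exp_smul_detailedBalance (hm : ∀ z, m z ≠ 0) (hrev : ∀ z w, m z * L z w = m w * L w z)
    (t : ℝ) (z w : V) : m z * exp (t • L) z w = m w * exp (t • L) w z :=
  exp_detailedBalance hm (fun i j => by
    simp only [Matrix.smul_apply, smul_eq_mul]
    linear_combination t * hrev i j) z w

theorem exp_smul_two_mul_apply_self_div (hm : ∀ z, 0 < m z)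
    (hrev : ∀ z w, m z * L z w = m w * L w z) (s : ℝ) (x : V) :
    exp ((2 * s) • L) x x / m x = ∑ z, exp (s • L) x z ^ 2 / m z := by
  rw [two_mul, add_smul, exp_add_of_commute _ _ (Commute.refl (s • L)), mul_apply, sum_div]
  refine sum_congr rfl fun z _ => ?_
  rw [div_eq_div_iff (hm x).ne' (hm z).ne']
  linear_combination exp (s • L) x z * exp_smul_detailedBalance (fun z => (hm z).ne') hrev s z x

theorem antitone_exp_smul_apply_self_div (hm : ∀ z, 0 < m z) (hoff : ∀ z w, z ≠ w → 0 ≤ L z w)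
    (hrow : ∀ z, ∑ w, L z w = 0) (hrev : ∀ z w, m z * L z w = m w * L w z) (x : V) :
    Antitone fun t : ℝ => exp (t • L) x x / m x := by
  set c : V → V → ℝ := fun z w => m z * L z w
  have hderiv (t : ℝ) : HasDerivAt (fun s : ℝ => ∑ z, exp (s • L) x z ^ 2 / m z)
      (2 * ∑ z, exp (t • L) x z / m z * laplacian c (fun w => exp (t • L) x w / m w) z) t := by
    refine (HasDerivAt.fun_sum fun z _ =>
      ((hasDerivAt_exp_smul_apply L x z t).pow 2).div_const (m z)).congr_deriv ?_
    rw [mul_sum]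
    refine sum_congr rfl fun z _ => ?_
    rw [mul_apply_eq_laplacian (fun z => (hm z).ne') hrow hrev]
    push_cast
    ring
  have hψ : Antitone fun s : ℝ => ∑ z, exp (s • L) x z ^ 2 / m z :=
    antitone_of_deriv_nonpos (fun t => (hderiv t).differentiableAt) fun t => by
      rw [(hderiv t).deriv, two_mul_sum_mul_laplacian hrev, neg_nonpos]
      exact dirichletEnergy_nonneg (fun z w h => mul_nonneg (hm z).le (hoff z w h)) _
  intro t t' htt'
  have := hψ (div_le_div_of_nonneg_right htt' zero_le_two)
  simpa only [← exp_smul_two_mul_apply_self_div hm hrev,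
    mul_div_cancel₀ _ (two_ne_zero (α := ℝ))] using this

theorem le_exp_smul_mulVec_apply (hoff : ∀ z w, z ≠ w → 0 ≤ L z w) (hrow : ∀ z, ∑ w, L z w = 0)
    {u : V → ℝ} {u₀ : ℝ} (hu₀ : ∀ z, u₀ ≤ u z) {t : ℝ} (ht : 0 ≤ t) (i : V) :
    u₀ ≤ (exp (t • L) *ᵥ u) i :=
  calc u₀ = ∑ z, exp (t • L) i z * u₀ := by rw [← sum_mul, sum_exp_smul_apply hrow, one_mul]
    _ ≤ ∑ z, exp (t • L) i z * u z :=
      sum_le_sum fun z _ => mul_le_mul_of_nonneg_left (hu₀ z) (exp_smul_apply_nonneg hoff ht i z)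

theorem mul_sub_inv_le_of_mulVec_eq_greenSource (hm : ∀ z, 0 < m z)
    (hoff : ∀ z w, z ≠ w → 0 ≤ L z w) (hrow : ∀ z, ∑ w, L z w = 0)
    (hrev : ∀ z w, m z * L z w = m w * L w z) {B : Finset V} {x : V} {u : V → ℝ}
    (hu : L *ᵥ u = greenSource m B x) {u₀ : ℝ} (hu₀ : ∀ z, u₀ ≤ u z) {T : ℝ} (hT : 0 ≤ T) :
    T * (exp (T • L) x x / m x - (∑ y ∈ B, m y)⁻¹) ≤ u x - u₀ := by
  set F : ℝ → ℝ := fun s => (exp (s • L) *ᵥ u) x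
  have hF (t : ℝ) : HasDerivAt F ((exp (t • L) *ᵥ greenSource m B x) x) t :=
    hu ▸ hasDerivAt_exp_smul_mulVec_apply L u x t
  have hF' : ∀ t ∈ interior (Set.Icc 0 T),
      deriv F t ≤ (∑ y ∈ B, m y)⁻¹ - exp (T • L) x x / m x := by
    intro t ht
    rw [interior_Icc] at ht
    rw [(hF t).deriv, mulVec_greenSource_apply]
    have hmass : ∑ z ∈ B, exp (t • L) x z ≤ 1 :=
      (sum_le_sum_of_subset_of_nonneg (subset_univ B) fun z _ _ =>
        exp_smul_apply_nonneg hoff ht.1.le x z).trans_eq (sum_exp_smul_apply hrow t x)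
    have hdiag := antitone_exp_smul_apply_self_div hm hoff hrow hrev x ht.2.le
    have := div_le_div_of_nonneg_right hmass (sum_nonneg fun y _ => (hm y).le : 0 ≤ ∑ y ∈ B, m y)
    simp only [one_div] at this hdiag
    linarith
  have hmvt := (convex_Icc 0 T).image_sub_le_mul_sub_of_deriv_le
    (fun t _ => (hF t).continuousAt.continuousWithinAt)
    (fun t _ => (hF t).differentiableAt.differentiableWithinAt) hF' 0 ⟨le_rfl, hT⟩ T ⟨hT, le_rfl⟩ hT
  have hF0 : F 0 = u x := by simp [F]
  have hFT : u₀ ≤ F T := le_exp_smul_mulVec_apply hoff hrow hu₀ hT x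
  linarith

end HeatKernel

section RandomWalkGenerator

variable {V : Type*} [DecidableEq V] {μ : V → V → ℝ} {μv : V → ℝ} {L : Matrix V V ℝ}

theorem mul_generator_apply_of_ne (hpos : ∀ x, 0 < μv x)
    (hL : ∀ x y, L x y = if x = y then -1 else μ x y / μv x) {z w : V} (h : z ≠ w) :
    μv z * L z w = μ z w := by
  rw [hL, if_neg h, mul_div_cancel₀ _ (hpos z).ne']

theorem mul_generator_apply_comm (hsym : ∀ x y, μ x y = μ y x) (hpos : ∀ x, 0 < μv x)
    (hL : ∀ x y, L x y = if x = y then -1 else μ x y / μv x) (z w : V) :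
    μv z * L z w = μv w * L w z := by
  rcases eq_or_ne z w with rfl | h
  · rfl
  · rw [mul_generator_apply_of_ne hpos hL h, mul_generator_apply_of_ne hpos hL h.symm, hsym]

variable [Fintype V]

theorem sum_generator_apply_eq_zero (hdiag : ∀ x, μ x x = 0) (hμv : ∀ x, μv x = ∑ y, μ x y)
    (hpos : ∀ x, 0 < μv x) (hL : ∀ x y, L x y = if x = y then -1 else μ x y / μv x) (z : V) :
    ∑ w, L z w = 0 := by
  have hsplit (w : V) : L z w = μ z w / μv z - if z = w then 1 else 0 := by
    rcases eq_or_ne z w with rfl | h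
    · simp [hL, hdiag]
    · simp [hL, h]
  simp [hsplit, sum_sub_distrib, ← sum_div, ← hμv, (hpos z).ne']

end RandomWalkGenerator

theorem on_diagonal_heat_kernel_upper_bound_general
    {V : Type*} [Fintype V] [DecidableEq V]
    (μ : V → V → ℝ) (hsym : ∀ x y, μ x y = μ y x)
    (hnonneg : ∀ x y, 0 ≤ μ x y) (hdiag : ∀ x, μ x x = 0)
    (hone : ∀ x y, μ x y ≠ 0 → 1 ≤ μ x y)
    (μv : V → ℝ) (hμv : ∀ x, μv x = ∑ y, μ x y)
    (hpos : ∀ x, 0 < μv x)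
    (G : SimpleGraph V) (hG : ∀ x y, G.Adj x y ↔ x ≠ y ∧ 0 < μ x y)
    (hconn : G.Connected)
    (L : Matrix V V ℝ)
    (hL : ∀ x y, L x y = if x = y then -1 else μ x y / μv x)
    (q : ℝ → V → V → ℝ)
    (hq : ∀ t x y, q t x y = NormedSpace.exp (t • L) x y / μv y)
    (x : V) (r : ℝ) (hr : 0 < r)
    (Vol : ℝ) (hVol : Vol = ∑ y, if (G.dist x y : ℝ) ≤ r then μv y else 0) :
    q (2 * r * Vol) x x ≤ 2 / Vol := by
  set B : Finset V := {y | (G.dist x y : ℝ) ≤ r}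
  have hxB : x ∈ B := by simp [B, hr.le]
  have hVolB : Vol = ∑ y ∈ B, μv y := by rw [hVol, sum_filter]
  have hVol_pos : 0 < Vol := hVolB ▸ sum_pos (fun y _ => hpos y) ⟨x, hxB⟩
  have hμL (z w : V) (h : z ≠ w) := mul_generator_apply_of_ne hpos hL h
  have hrow := sum_generator_apply_eq_zero hdiag hμv hpos hL
  have hrev := mul_generator_apply_comm hsym hpos hL
  have hc (z w : V) (h : z ≠ w) : 0 ≤ μv z * L z w := hμL z w h ▸ hnonneg z w
  have hoff (z w : V) (h : z ≠ w) : 0 ≤ L z w := nonneg_of_mul_nonneg_right (hc z w h) (hpos z)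
  have hadj (z w : V) (h : G.Adj z w) : 1 ≤ μv z * L z w :=
    hμL z w h.ne ▸ hone z w ((hG z w).1 h).2.ne'
  obtain ⟨u, hu⟩ := exists_laplacian_eq_of_sum_eq_zero hconn hrev hc
    (fun z w h => one_pos.trans_le (hadj z w h)) (f := fun z => μv z * greenSource μv B x z)
    (by simpa [hVolB ▸ hVol_pos.ne'] using sum_mul_mul_greenSource (hpos x).ne' 1 B)
  have hLu : L *ᵥ u = greenSource μv B x := funext fun z =>
    mul_left_cancel₀ (hpos z).ne' ((mul_mulVec_apply_eq_laplacian hrow u z).trans (congrFun hu z))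
  obtain ⟨b, hb, hosc⟩ := exists_forall_le_sub_le_two_mul hconn hrev hc hadj hpos hr.le
    (fun z hz => by simpa [B] using hz) hxB (congrFun hu)
  have key := mul_sub_inv_le_of_mulVec_eq_greenSource hpos hoff hrow hrev hLu hb
    (by positivity : 0 ≤ 2 * r * Vol)
  rw [← hVolB] at key
  rw [hq, le_div_iff₀ hVol_pos]
  nlinarith [mul_inv_cancel₀ hVol_pos.ne']

/-- Theorem 4.1 for a finite weighted graph: the on-diagonal heat kernel of the
continuous-time random walk satisfies `q_{2rV(x,r)}(x,x) ≤ 2/V(x,r)`. -/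
theorem on_diagonal_heat_kernel_upper_bound
    {V : Type*} [Fintype V] [Nonempty V] [DecidableEq V]
    (μ : V → V → ℝ) (hsym : ∀ x y, μ x y = μ y x)
    (hnonneg : ∀ x y, 0 ≤ μ x y) (hdiag : ∀ x, μ x x = 0)
    (hone : ∀ x y, μ x y ≠ 0 → 1 ≤ μ x y)
    (μv : V → ℝ) (hμv : ∀ x, μv x = ∑ y, μ x y)
    (hpos : ∀ x, 0 < μv x)
    (G : SimpleGraph V) (hG : ∀ x y, G.Adj x y ↔ x ≠ y ∧ 0 < μ x y)
    (hconn : G.Connected)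
    (L : Matrix V V ℝ)
    (hL : ∀ x y, L x y = if x = y then -1 else μ x y / μv x)
    (q : ℝ → V → V → ℝ)
    (hq : ∀ t x y, q t x y = NormedSpace.exp (t • L) x y / μv y)
    (x : V) (r : ℝ) (hr : 0 < r)
    (Vol : ℝ) (hVol : Vol = ∑ y, if (G.dist x y : ℝ) ≤ r then μv y else 0) :
    q (2 * r * Vol) x x ≤ 2 / Vol :=
  on_diagonal_heat_kernel_upper_bound_general μ hsym hnonneg hdiag hone μv hμv hpos G hG hconn L hL
    q hq x r hr Vol hVol
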